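/- arXiv:1209.4022 — 3 statements merged into one kernel-verified Lean document; each statement's English description precedes it below -/
import Mathlib

section
/- Let G be the star graph S_n (n ≥ 4) plus one edge between two distinct leaves i and j, with α sufficiently small that the Katz series converges. Then the normalized Katz centrality of i (and of j) equals K_s^{(+1)} = ((n-3)α² + (1-n)α - 2) / ((n-3)(α-1)nα - 2n - 6α). -/
open Matrix BigOperators

/-- Adjacency matrix of the star graph on `n` vertices with hub `h`,
plus one extra edge between the two leaves `i` and `j`. -/
def starPlusAdj (n : ℕ) (h i j : Fin n) : Matrix (Fin n) (Fin n) ℝ :=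
  Matrix.of fun a b =>
    if a ≠ b ∧ (a = h ∨ b = h ∨ (a = i ∧ b = j) ∨ (a = j ∧ b = i)) then 1 else 0

/-- Katz centrality of vertex `v`: `∑_{k≥1} ∑_u α^k (A^k)_{vu}`. -/
noncomputable def katz {n : ℕ} (A : Matrix (Fin n) (Fin n) ℝ) (α : ℝ) (v : Fin n) : ℝ :=
  ∑' k : ℕ, α ^ (k + 1) * ∑ u, (A ^ (k + 1)) v u

/-- Normalized Katz centrality. -/
noncomputable def normKatz {n : ℕ} (A : Matrix (Fin n) (Fin n) ℝ) (α : ℝ) (v : Fin n) : ℝ :=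
  katz A α v / ∑ u, katz A α u

/-- Entries of powers of an entrywise-nonnegative matrix are nonnegative. -/
lemma pow_entry_nonneg {n : ℕ} (A : Matrix (Fin n) (Fin n) ℝ) (hA : ∀ a b, 0 ≤ A a b)
    (k : ℕ) : ∀ a b : Fin n, 0 ≤ (A ^ k) a b := by
  induction k with
  | zero =>
    intro a b
    rw [pow_zero, Matrix.one_apply]
    split <;> norm_num
  | succ k ih =>
    intro a b
    rw [pow_succ, Matrix.mul_apply]
    exact Finset.sum_nonneg fun w _ => mul_nonneg (ih a w) (hA w b)

lemma katz_nonneg {n : ℕ} (A : Matrix (Fin n) (Fin n) ℝ) (hA : ∀ a b, 0 ≤ A a b)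
    (α : ℝ) (hα : 0 ≤ α) (v : Fin n) : 0 ≤ katz A α v :=
  tsum_nonneg fun k => mul_nonneg (pow_nonneg hα _)
    (Finset.sum_nonneg fun u _ => pow_entry_nonneg A hA _ v u)

/-- The fundamental linear equation satisfied by the Katz centrality vector. -/
lemma katz_eq {n : ℕ} (A : Matrix (Fin n) (Fin n) ℝ) (α : ℝ)
    (hconv : ∀ v : Fin n, Summable fun k : ℕ => α ^ (k + 1) * ∑ u, (A ^ (k + 1)) v u)
    (v : Fin n) :
    katz A α v = α * (∑ u, A v u) + α * ∑ u, A v u * katz A α u := by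
  have hrec : ∀ k : ℕ, α ^ (k + 1 + 1) * ∑ u, (A ^ (k + 1 + 1)) v u
      = ∑ w, A v w * (α * (α ^ (k + 1) * ∑ u, (A ^ (k + 1)) w u)) := by
    intro k
    have h2 : ∑ u, (A ^ (k + 1 + 1)) v u = ∑ w, A v w * ∑ u, (A ^ (k + 1)) w u := by
      rw [pow_succ']
      simp only [Matrix.mul_apply]
      rw [Finset.sum_comm]
      exact Finset.sum_congr rfl fun w _ => (Finset.mul_sum _ _ _).symm
    rw [h2, Finset.mul_sum]
    exact Finset.sum_congr rfl fun w _ => by ring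
  rw [katz, Summable.tsum_eq_zero_add (hconv v)]
  have h0 : α ^ (0 + 1) * ∑ u, (A ^ (0 + 1)) v u = α * ∑ u, A v u := by norm_num
  rw [h0]
  congr 1
  rw [tsum_congr hrec, Summable.tsum_finsetSum (fun w _ => ((hconv w).mul_left α).mul_left (A v w))]
  rw [Finset.mul_sum]
  refine Finset.sum_congr rfl fun w _ => ?_
  rw [tsum_mul_left, tsum_mul_left, katz]
  ring

set_option maxHeartbeats 2000000 in
theorem normKatz_star_plus_edge (n : ℕ) (hn : 4 ≤ n) (h i j : Fin n)
    (hih : i ≠ h) (hjh : j ≠ h) (hij : i ≠ j) (α : ℝ) (hα0 : 0 < α)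
    (hconv : ∀ v : Fin n,
      Summable fun k : ℕ => α ^ (k + 1) * ∑ u, ((starPlusAdj n h i j) ^ (k + 1)) v u) :
    normKatz (starPlusAdj n h i j) α i =
        (((n : ℝ) - 3) * α ^ 2 + (1 - (n : ℝ)) * α - 2) /
          (((n : ℝ) - 3) * (α - 1) * n * α - 2 * n - 6 * α) ∧
    normKatz (starPlusAdj n h i j) α j =
        (((n : ℝ) - 3) * α ^ 2 + (1 - (n : ℝ)) * α - 2) /
          (((n : ℝ) - 3) * (α - 1) * n * α - 2 * n - 6 * α) := by
  set A := starPlusAdj n h i j with hAdef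
  have hAnn : ∀ a b, 0 ≤ A a b := by
    intro a b
    simp only [hAdef, starPlusAdj, Matrix.of_apply]
    split <;> norm_num
  have hn' : (4 : ℝ) ≤ (n : ℝ) := by exact_mod_cast hn
  -- rows of A
  have hAi : ∀ b, A i b = (if b = h then (1:ℝ) else 0) + (if b = j then 1 else 0) := by
    intro b
    simp only [hAdef, starPlusAdj, Matrix.of_apply]
    by_cases hbh : b = h <;> by_cases hbj : b = j <;>
      simp_all [hih, hij, hjh] <;> tauto
  have hAj : ∀ b, A j b = (if b = h then (1:ℝ) else 0) + (if b = i then 1 else 0) := by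
    intro b
    simp only [hAdef, starPlusAdj, Matrix.of_apply]
    by_cases hbh : b = h <;> by_cases hbi : b = i <;>
      simp_all [hih, hij, hjh] <;> tauto
  have hAh : ∀ b, A h b = 1 - (if b = h then (1:ℝ) else 0) := by
    intro b
    simp only [hAdef, starPlusAdj, Matrix.of_apply]
    by_cases hbh : b = h <;> simp_all [hih, hij, hjh] <;> tauto
  have hAl : ∀ l : Fin n, l ≠ h → l ≠ i → l ≠ j → ∀ b, A l b = (if b = h then (1:ℝ) else 0) := by
    intro l hlh hli hlj b
    simp only [hAdef, starPlusAdj, Matrix.of_apply]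
    by_cases hbh : b = h <;> simp_all [hih, hij, hjh] <;> tauto
  have hAij : A i j = 1 := by
    rw [hAi]
    simp [hjh, hij]
  have hAji : A j i = 1 := by
    rw [hAj]
    simp [hih]
  -- α < 1
  have key : ∀ k : ℕ, 1 ≤ (A^(k+1)) i i + (A^(k+1)) i j ∧
      1 ≤ (A^(k+1)) j i + (A^(k+1)) j j := by
    intro k
    induction k with
    | zero =>
      rw [pow_one]
      constructor
      · have := hAnn i i; linarith [hAij]
      · have := hAnn j j; linarith [hAji]
    | succ k ih =>
      have hstep : ∀ a b : Fin n, A a b = 1 → ∀ cc : Fin n,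
          (A^(k+1)) b cc ≤ (A^(k+1+1)) a cc := by
        intro a b hab cc
        have expand : (A^(k+1+1)) a cc = ∑ w, A a w * (A^(k+1)) w cc := by
          rw [pow_succ', Matrix.mul_apply]
        rw [expand]
        calc (A^(k+1)) b cc = A a b * (A^(k+1)) b cc := by rw [hab, one_mul]
        _ ≤ ∑ w, A a w * (A^(k+1)) w cc :=
          Finset.single_le_sum
            (fun w _ => mul_nonneg (hAnn a w) (pow_entry_nonneg A hAnn _ w cc))
            (Finset.mem_univ b)
      constructor
      · have h1 := hstep i j hAij i
        have h2 := hstep i j hAij j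
        linarith [ih.2]
      · have h1 := hstep j i hAji i
        have h2 := hstep j i hAji j
        linarith [ih.1]
  have hα1 : α < 1 := by
    by_contra hle
    push_neg at hle
    have hsum : Summable (fun k : ℕ => α ^ (k+1)) := by
      apply Summable.of_nonneg_of_le (fun k => (pow_pos hα0 _).le) _ (hconv i)
      intro k
      have h3 : (A^(k+1)) i i + (A^(k+1)) i j ≤ ∑ u, (A^(k+1)) i u := by
        rw [← Finset.sum_pair hij]
        exact Finset.sum_le_sum_of_subset_of_nonneg (Finset.subset_univ _)
          (fun u _ _ => pow_entry_nonneg A hAnn _ i u)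
      have h2 : (1:ℝ) ≤ ∑ u, (A^(k+1)) i u := le_trans (key k).1 h3
      nlinarith [pow_pos hα0 (k+1)]
    have h0 := hsum.tendsto_atTop_zero
    have h1 : (1:ℝ) ≤ 0 := by
      refine ge_of_tendsto' h0 fun k => ?_
      calc (1:ℝ) = 1 ^ (k+1) := (one_pow _).symm
      _ ≤ α ^ (k+1) := pow_le_pow_left₀ (by norm_num) hle _
    linarith
  -- sum helpers
  have hsum1 : ∀ (x : Fin n → ℝ) (a : Fin n), ∑ u, (if u = a then (1:ℝ) else 0) * x u = x a := by
    intro x a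
    simp [ite_mul]
  -- the basic equations
  have hkatz := katz_eq A α hconv
  set Kh := katz A α h with hKh
  set Ki := katz A α i with hKi
  set Kj := katz A α j with hKj
  set T := ∑ u, katz A α u with hT
  have ei : Ki = α * 2 + α * (Kh + Kj) := by
    have := hkatz i
    have e1 : ∑ u, A i u = (2:ℝ) := by
      norm_num [hAi, Finset.sum_add_distrib]
    have e2 : ∑ u, A i u * katz A α u = Kh + Kj := by
      calc ∑ u, A i u * katz A α u
          = ∑ u, ((if u = h then (1:ℝ) else 0) * katz A α u
              + (if u = j then (1:ℝ) else 0) * katz A α u) := by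
            refine Finset.sum_congr rfl fun u _ => ?_
            rw [hAi u]; ring
      _ = Kh + Kj := by rw [Finset.sum_add_distrib, hsum1, hsum1]
    rw [e1, e2] at this
    exact this
  have ej : Kj = α * 2 + α * (Kh + Ki) := by
    have := hkatz j
    have e1 : ∑ u, A j u = (2:ℝ) := by
      norm_num [hAj, Finset.sum_add_distrib]
    have e2 : ∑ u, A j u * katz A α u = Kh + Ki := by
      calc ∑ u, A j u * katz A α u
          = ∑ u, ((if u = h then (1:ℝ) else 0) * katz A α u
              + (if u = i then (1:ℝ) else 0) * katz A α u) := by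
            refine Finset.sum_congr rfl fun u _ => ?_
            rw [hAj u]; ring
      _ = Kh + Ki := by rw [Finset.sum_add_distrib, hsum1, hsum1]
    rw [e1, e2] at this
    exact this
  have eh : Kh = α * ((n:ℝ) - 1) + α * (T - Kh) := by
    have := hkatz h
    have e1 : ∑ u, A h u = (n:ℝ) - 1 := by
      simp [hAh, Finset.sum_sub_distrib, Finset.card_univ]
    have e2 : ∑ u, A h u * katz A α u = T - Kh := by
      calc ∑ u, A h u * katz A α u
          = ∑ u, (katz A α u - (if u = h then (1:ℝ) else 0) * katz A α u) := by
            refine Finset.sum_congr rfl fun u _ => ?_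
            rw [hAh u]; ring
      _ = T - Kh := by rw [Finset.sum_sub_distrib, hsum1]
    rw [e1, e2] at this
    exact this
  have el : ∀ l : Fin n, l ≠ h → l ≠ i → l ≠ j → katz A α l = α * 1 + α * Kh := by
    intro l hlh hli hlj
    have := hkatz l
    have e1 : ∑ u, A l u = (1:ℝ) := by
      simp [hAl l hlh hli hlj]
    have e2 : ∑ u, A l u * katz A α u = Kh := by
      calc ∑ u, A l u * katz A α u
          = ∑ u, (if u = h then (1:ℝ) else 0) * katz A α u := by
            refine Finset.sum_congr rfl fun u _ => ?_
            rw [hAl l hlh hli hlj u]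
      _ = Kh := hsum1 _ _
    rw [e1, e2] at this
    exact this
  -- the total
  have hs3 : ({h, i, j} : Finset (Fin n)).card = 3 := by
    rw [Finset.card_insert_of_notMem (by simp [Ne.symm hih, Ne.symm hjh]),
      Finset.card_insert_of_notMem (by simp [hij]), Finset.card_singleton]
  have eT : T = Kh + Ki + Kj + ((n:ℝ) - 3) * (α + α * Kh) := by
    have hsplit : T = ∑ u ∈ Finset.univ \ ({h, i, j} : Finset (Fin n)), katz A α u
        + ∑ u ∈ ({h, i, j} : Finset (Fin n)), katz A α u := by
      rw [hT, Finset.sum_sdiff (Finset.subset_univ _)]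
    have h1 : ∑ u ∈ ({h, i, j} : Finset (Fin n)), katz A α u = Kh + Ki + Kj := by
      rw [Finset.sum_insert (by simp [Ne.symm hih, Ne.symm hjh]),
        Finset.sum_insert (by simp [hij]), Finset.sum_singleton]
      ring
    have h2 : ∑ u ∈ Finset.univ \ ({h, i, j} : Finset (Fin n)), katz A α u
        = ((n:ℝ) - 3) * (α + α * Kh) := by
      have hcard : (Finset.univ \ ({h, i, j} : Finset (Fin n))).card = n - 3 := by
        rw [Finset.card_sdiff_of_subset (Finset.subset_univ _), hs3, Finset.card_univ, Fintype.card_fin]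
      have hval : ∀ u ∈ Finset.univ \ ({h, i, j} : Finset (Fin n)), katz A α u = α + α * Kh := by
        intro u hu
        simp only [Finset.mem_sdiff, Finset.mem_insert, Finset.mem_singleton,
          Finset.mem_univ, true_and] at hu
        push_neg at hu
        rw [el u hu.1 hu.2.1 hu.2.2]
        ring
      rw [Finset.sum_congr rfl hval, Finset.sum_const, hcard, nsmul_eq_mul]
      have hcast : ((n - 3 : ℕ) : ℝ) = (n:ℝ) - 3 := by
        rw [Nat.cast_sub (by omega)]; norm_num
      rw [hcast]
    rw [hsplit, h1, h2]
    ring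
  -- nonnegativity
  have hKh0 : 0 ≤ Kh := katz_nonneg A hAnn α hα0.le h
  have hKi0 : 0 ≤ Ki := katz_nonneg A hAnn α hα0.le i
  have hKj0 : 0 ≤ Kj := katz_nonneg A hAnn α hα0.le j
  -- Ki = Kj
  have hij2 : Ki = Kj := by
    have h1 : (1 + α) * (Ki - Kj) = 0 := by linear_combination ei - ej
    rcases mul_eq_zero.mp h1 with h2 | h2
    · linarith
    · linarith
  have ei' : Ki = α * 2 + α * (Kh + Ki) := by rw [hij2] at ei ⊢; exact ei
  have eT' : T = Kh + 2 * Ki + ((n:ℝ) - 3) * (α + α * Kh) := by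
    rw [eT, ← hij2]; ring
  -- solve for Kh
  have hcKh : ((1-α)*(1-α^2*((n:ℝ)-3)) - 2*α^2) * Kh
      = (1-α)*(α*((n:ℝ)-1)+α^2*((n:ℝ)-3)) + 4*α^2 := by
    linear_combination (1-α) * eh + α*(1-α) * eT' + 2*α * ei'
  have hd : 0 < (1-α)*(α*((n:ℝ)-1)+α^2*((n:ℝ)-3)) + 4*α^2 := by
    have hX : 0 < α*((n:ℝ)-1)+α^2*((n:ℝ)-3) := by nlinarith [mul_pos hα0 hα0]
    have h2 := mul_pos (show (0:ℝ) < 1-α by linarith) hX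
    nlinarith [mul_pos hα0 hα0]
  have hc : 0 < (1-α)*(1-α^2*((n:ℝ)-3)) - 2*α^2 := by
    by_contra hcon
    push_neg at hcon
    nlinarith [mul_nonpos_of_nonpos_of_nonneg hcon hKh0]
  -- T > 0
  have hKipos : 0 < Ki := by nlinarith
  have hTpos : 0 < T := by
    have h1 : 0 ≤ ((n:ℝ) - 3) * (α + α * Kh) := by
      apply mul_nonneg (by linarith)
      nlinarith
    nlinarith
  -- denominator < 0
  have hD : ((n:ℝ)-3)*(α-1)*(n:ℝ)*α - 2*(n:ℝ) - 6*α < 0 := by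
    nlinarith [mul_pos (mul_pos (mul_pos (show (0:ℝ) < (n:ℝ)-3 by linarith)
      (show (0:ℝ) < 1-α by linarith)) (show (0:ℝ) < (n:ℝ) by linarith)) hα0]
  -- the main computation
  have main : Ki / T = (((n : ℝ) - 3) * α ^ 2 + (1 - (n : ℝ)) * α - 2) /
      (((n : ℝ) - 3) * (α - 1) * n * α - 2 * n - 6 * α) := by
    rw [div_eq_div_iff hTpos.ne' hD.ne]
    have hmul : (((1-α)*(1-α^2*((n:ℝ)-3)) - 2*α^2) * (1-α)) *
        (Ki * (((n : ℝ) - 3) * (α - 1) * n * α - 2 * n - 6 * α))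
        = (((1-α)*(1-α^2*((n:ℝ)-3)) - 2*α^2) * (1-α)) *
        ((((n : ℝ) - 3) * α ^ 2 + (1 - (n : ℝ)) * α - 2) * T) := by
      linear_combination
        (((1-α)*(1-α^2*((n:ℝ)-3)) - 2*α^2) *
          ((((n:ℝ)-3)*(α-1)*(n:ℝ)*α - 2*(n:ℝ) - 6*α)
            - 2*((((n:ℝ)-3)*α^2 + (1-(n:ℝ))*α - 2)))) * ei'
        + (α*((((n:ℝ)-3)*(α-1)*(n:ℝ)*α - 2*(n:ℝ) - 6*α)
            - 2*((((n:ℝ)-3)*α^2 + (1-(n:ℝ))*α - 2)))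
          - (1-α)*((((n:ℝ)-3)*α^2 + (1-(n:ℝ))*α - 2))*(1+((n:ℝ)-3)*α)) * hcKh
        - (((1-α)*(1-α^2*((n:ℝ)-3)) - 2*α^2)*(1-α)
            *((((n:ℝ)-3)*α^2 + (1-(n:ℝ))*α - 2))) * eT'
    have hne : (((1-α)*(1-α^2*((n:ℝ)-3)) - 2*α^2) * (1-α)) ≠ 0 :=
      (mul_pos hc (by linarith)).ne'
    exact mul_left_cancel₀ hne hmul
  constructor
  · rw [normKatz, ← hKi, ← hT]
    exact main
  · rw [normKatz, ← hKj, ← hT, ← hij2]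
    exact main
end

section
/- For n ≥ 4 and sufficiently small α > 0, adding an edge between two leaves of the star S_n strictly increases the normalized Katz centrality of those two leaves: K_s^{(+1)} = ((n-3)α² + (1-n)α - 2)/((n-3)(α-1)nα - 2n - 6α) > ((n-1)α+1)/((n-1)(nα+2)) = K_s. -/
theorem leaf_link_increases_centrality (n : ℕ) (hn : 4 ≤ n) :
    ∃ ε > (0 : ℝ), ∀ α : ℝ, 0 < α → α < ε →
      (((n : ℝ) - 3) * α ^ 2 + (1 - (n : ℝ)) * α - 2) /
          (((n : ℝ) - 3) * (α - 1) * n * α - 2 * n - 6 * α) >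
        (((n : ℝ) - 1) * α + 1) / (((n : ℝ) - 1) * ((n : ℝ) * α + 2)) := by
  refine ⟨1, one_pos, fun α hα hα1 => ?_⟩
  have hm : (4 : ℝ) ≤ (n : ℝ) := by exact_mod_cast hn
  set m : ℝ := (n : ℝ) with hmdef
  have hD1 : 0 < -((m - 3) * (α - 1) * m * α - 2 * m - 6 * α) := by
    nlinarith [mul_nonneg (mul_nonneg (mul_nonneg (by linarith : (0:ℝ) ≤ m - 3)
      (by linarith : (0:ℝ) ≤ 1 - α)) (by linarith : (0:ℝ) ≤ m)) hα.le]
  have hD2 : 0 < (m - 1) * (m * α + 2) :=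
    mul_pos (by linarith) (by nlinarith [mul_nonneg (by linarith : (0:ℝ) ≤ m) hα.le])
  have key : ((m - 1) * α + 1) * (-((m - 3) * (α - 1) * m * α - 2 * m - 6 * α)) <
      (-((m - 3) * α ^ 2 + (1 - m) * α - 2)) * ((m - 1) * (m * α + 2)) := by
    have ha2 : 0 ≤ α ^ 2 * (m ^ 2 - 3 * m) :=
      mul_nonneg (sq_nonneg α) (by nlinarith)
    have ha1 : 0 ≤ α * (m ^ 2 - m - 4) := mul_nonneg hα.le (by nlinarith)
    nlinarith [ha1, ha2]
  calc ((m - 1) * α + 1) / ((m - 1) * (m * α + 2))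
      < (-((m - 3) * α ^ 2 + (1 - m) * α - 2)) /
        (-((m - 3) * (α - 1) * m * α - 2 * m - 6 * α)) := by
        rw [div_lt_div_iff₀ hD2 hD1]; linarith [key]
    _ = ((m - 3) * α ^ 2 + (1 - m) * α - 2) /
        ((m - 3) * (α - 1) * m * α - 2 * m - 6 * α) := neg_div_neg_eq _ _
end

section
/- The star graph S_n is pairwise stable in the centrality game if the hub's link cost ζ and the leaves' link cost δ satisfy: (α+1)(α+2)/((nα+2)((n-1)α+2)) > ζ/R (hub won't delete a link), ((n-1)²α + n - 1)/((n-1)(nα+2)) > δ/R (no leaf will disconnect), and (n-1)·K_s^{(+1)} - (n-1)·K_s < δ/R (no two leaves will link), where K_s = ((n-1)α+1)/((n-1)(nα+2)) and K_s^{(+1)} = ((n-3)α² + (1-n)α - 2)/((n-3)(α-1)nα - 2n - 6α). -/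
/-- Pairwise stability of the star `S_n` in the centrality game: with normalized Katz
centralities `K_b = (α+1)/(nα+2)` (hub in `S_n`), `K_b' = (α+1)/((n-1)α+2)` (hub in
`S_{n-1}`), `K_s = ((n-1)α+1)/((n-1)(nα+2))` (leaf), and
`K_s⁺ = ((n-3)α²+(1-n)α-2)/((n-3)(α-1)nα-2n-6α)` (leaf after linking to another leaf),
the hub does not gain from deleting a link, a leaf does not gain from disconnecting
(becoming an isolated node with payoff 0), and no leaf gains from linking with another
leaf. -/
theorem star_pairwise_stable (n : ℕ) (hn : 4 ≤ n) (α R ζ δ : ℝ) (hα0 : 0 < α)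
    (hα1 : α < 1 / Real.sqrt ((n : ℝ) - 1)) (hR : 0 < R)
    (hhub : (α + 1) * (α + 2) / (((n : ℝ) * α + 2) * (((n : ℝ) - 1) * α + 2)) > ζ / R)
    (hdel : (((n : ℝ) - 1) ^ 2 * α + (n : ℝ) - 1) / (((n : ℝ) - 1) * ((n : ℝ) * α + 2))
        > δ / R)
    (hadd : ((n : ℝ) - 1) *
          ((((n : ℝ) - 3) * α ^ 2 + (1 - (n : ℝ)) * α - 2) /
            (((n : ℝ) - 3) * (α - 1) * n * α - 2 * n - 6 * α)) -
        ((n : ℝ) - 1) * ((((n : ℝ) - 1) * α + 1) / (((n : ℝ) - 1) * ((n : ℝ) * α + 2)))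
        < δ / R) :
    -- the hub will not delete a link:
    (R * ((n : ℝ) - 1) * ((α + 1) / ((n : ℝ) * α + 2)) - ((n : ℝ) - 1) * ζ >
        R * ((n : ℝ) - 2) * ((α + 1) / (((n : ℝ) - 1) * α + 2)) - ((n : ℝ) - 2) * ζ) ∧
    -- a leaf will not disconnect from the hub (payoff of an isolated node is 0):
    (R * ((n : ℝ) - 1) *
        ((((n : ℝ) - 1) * α + 1) / (((n : ℝ) - 1) * ((n : ℝ) * α + 2))) - δ > 0) ∧
    -- no leaf gains from linking with another leaf:
    (R * ((n : ℝ) - 1) *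
          ((((n : ℝ) - 3) * α ^ 2 + (1 - (n : ℝ)) * α - 2) /
            (((n : ℝ) - 3) * (α - 1) * n * α - 2 * n - 6 * α)) - 2 * δ <
        R * ((n : ℝ) - 1) *
          ((((n : ℝ) - 1) * α + 1) / (((n : ℝ) - 1) * ((n : ℝ) * α + 2))) - δ) := by
  have hn' : (4:ℝ) ≤ (n:ℝ) := by exact_mod_cast hn
  have hD1 : (0:ℝ) < (n:ℝ) * α + 2 := by nlinarith
  have hD2 : (0:ℝ) < ((n:ℝ) - 1) * α + 2 := by nlinarith
  have hN1 : ((n:ℝ) - 1) ≠ 0 := by nlinarith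
  refine ⟨?_, ?_, ?_⟩
  · have hζ : ζ < (α + 1) * (α + 2) / (((n : ℝ) * α + 2) * (((n : ℝ) - 1) * α + 2)) * R := by
      rw [gt_iff_lt, div_lt_iff₀ hR] at hhub; exact hhub
    have key : R * ((n : ℝ) - 1) * ((α + 1) / ((n : ℝ) * α + 2))
        - R * ((n : ℝ) - 2) * ((α + 1) / (((n : ℝ) - 1) * α + 2))
        = (α + 1) * (α + 2) / (((n : ℝ) * α + 2) * (((n : ℝ) - 1) * α + 2)) * R := by
      field_simp
      ring
    linarith
  · have hδ : δ < (((n : ℝ) - 1) ^ 2 * α + (n : ℝ) - 1) / (((n : ℝ) - 1) * ((n : ℝ) * α + 2)) * R := by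
      rw [gt_iff_lt, div_lt_iff₀ hR] at hdel; exact hdel
    have key : R * ((n : ℝ) - 1) *
        ((((n : ℝ) - 1) * α + 1) / (((n : ℝ) - 1) * ((n : ℝ) * α + 2)))
        = (((n : ℝ) - 1) ^ 2 * α + (n : ℝ) - 1) / (((n : ℝ) - 1) * ((n : ℝ) * α + 2)) * R := by
      have h1 : ((n:ℝ) * α + 2) ≠ 0 := ne_of_gt hD1
      field_simp
      ring
    linarith
  · rw [lt_div_iff₀ hR] at hadd
    nlinarith [hadd]
end
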